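/- In a finite concurrent reachability game ⟨C,⊤⟩, the value valuation equals the least fixed point m of the operator Δ (i.e. val(q) = m(q) for every state q), and moreover there exists a positional Player B strategy s_B such that for every state q and every Player A strategy s_A one has P^{s_A,s_B}_q(⊤) ≤ m(q), i.e. s_B is uniformly optimal for Player B. -/

import Mathlib

open scoped BigOperators Classical

noncomputable section

/-- A probability distribution on a finite type. -/
def FDist (X : Type) [Fintype X] : Type :=
  { p : X → ℝ // (∀ x, 0 ≤ p x) ∧ ∑ x, p x = 1 }

namespace CRG

variable {A B Q D : Type} [Fintype A] [Fintype B] [Fintype Q] [Fintype D]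

/-- The support of a distribution. -/
def supp {X : Type} [Fintype X] (σ : FDist X) : Set X := { x | σ.1 x ≠ 0 }

/-- The Dirac distribution. -/
def dirac {X : Type} [Fintype X] [DecidableEq X] (x : X) : FDist X :=
  ⟨fun y => if y = x then 1 else 0, by
    constructor
    · intro y
      dsimp only
      split <;> norm_num
    · simp⟩

/-- Outcome of a pair of mixed strategies in the game in normal form with payoff `u`. -/
def out (u : A → B → ℝ) (σA : FDist A) (σB : FDist B) : ℝ :=
  ∑ a, ∑ b, σA.1 a * σB.1 b * u a b

/-- Outcome of a mixed strategy of Player A against a pure action of Player B. -/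
def outB (u : A → B → ℝ) (σA : FDist A) (b : B) : ℝ :=
  ∑ a, σA.1 a * u a b

/-- The value of a Player A mixed strategy in a game in normal form. -/
def valStratGF (u : A → B → ℝ) (σA : FDist A) : ℝ :=
  ⨅ σB : FDist B, out u σA σB

/-- The (von Neumann) value of a finite game in normal form. -/
def valGF (u : A → B → ℝ) : ℝ :=
  ⨆ σA : FDist A, valStratGF u σA

/-- The optimal Player A mixed strategies in a game in normal form. -/
def OptA (u : A → B → ℝ) : Set (FDist A) := { σA | valStratGF u σA = valGF u }

/-- The optimal actions of Player B against the Player A mixed strategy `σA`. -/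
def optActs (u : A → B → ℝ) (σA : FDist A) : Set B :=
  { b | outB u σA b = valStratGF u σA }

/-- μ_v : the lift of a valuation of the states to the Nature states. -/
def lift (dist : D → FDist Q) (v : Q → ℝ) (d : D) : ℝ := ∑ q, (dist d).1 q * v q

/-- The payoff function of the local interaction `F_q` valued by `μ_m`. -/
def locPay (δ : Q → A → B → D) (dist : D → FDist Q) (m : Q → ℝ) (q : Q) : A → B → ℝ :=
  fun a b => lift dist m (δ q a b)

/-- One-step transition probability between states. -/
def step (δ : Q → A → B → D) (dist : D → FDist Q) (σA : FDist A) (σB : FDist B)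
    (q q' : Q) : ℝ :=
  ∑ a, ∑ b, σA.1 a * σB.1 b * (dist (δ q a b)).1 q'

/-- The operator Δ on valuations of the states. -/
def Δop (δ : Q → A → B → D) (dist : D → FDist Q) (T : Q) (v : Q → ℝ) : Q → ℝ :=
  fun q => if q = T then 1 else valGF (fun a b => lift dist v (δ q a b))

/-- The target `T` is an absorbing (self-looping) sink. -/
def Absorbing (δ : Q → A → B → D) (dist : D → FDist Q) (T : Q) : Prop :=
  ∀ a b, (dist (δ T a b)).1 = fun q => if q = T then 1 else 0

/-- `m` is the least fixed point of Δ on `[0,1]^Q`. -/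
def IsLfpDelta (δ : Q → A → B → D) (dist : D → FDist Q) (T : Q) (m : Q → ℝ) : Prop :=
  (∀ q, m q ∈ Set.Icc (0:ℝ) 1) ∧ Δop δ dist T m = m ∧
    ∀ v : Q → ℝ, (∀ q, v q ∈ Set.Icc (0:ℝ) 1) → Δop δ dist T v = v → ∀ q, m q ≤ v q

/-- A strategy: a history of past states together with the current state gives a
mixed action.  (This encodes maps `Q⁺ → 𝒟(X)`.) -/
def Strat (Q X : Type) [Fintype X] : Type := List Q → Q → FDist X

/-- Residual strategy after the history `π` has been played. -/
def residual {X : Type} [Fintype X] (s : Strat Q X) (π : List Q) : Strat Q X :=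
  fun h q => s (π ++ h) q

/-- The (positional) strategy associated with a per-state choice of mixed actions. -/
def ofPos {X : Type} [Fintype X] (s : Q → FDist X) : Strat Q X := fun _ q => s q

/-- Probability of reaching the set `S` within `n` steps from current state `q`,
history `h` having been played. -/
def reachSetNAux (δ : Q → A → B → D) (dist : D → FDist Q) (S : Set Q) :
    ℕ → Strat Q A → Strat Q B → List Q → Q → ℝ
  | 0, _, _, _, q => if q ∈ S then 1 else 0
  | n + 1, sA, sB, h, q =>
      if q ∈ S then 1
      else ∑ q', step δ dist (sA h q) (sB h q) q q' *
        reachSetNAux δ dist S n sA sB (h ++ [q]) q'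

/-- Probability of reaching the set `S` within `n` steps from state `q`. -/
def reachSetN (δ : Q → A → B → D) (dist : D → FDist Q) (S : Set Q) (n : ℕ)
    (sA : Strat Q A) (sB : Strat Q B) (q : Q) : ℝ :=
  reachSetNAux δ dist S n sA sB [] q

/-- Probability of reaching the target `T` within `n` steps from state `q`. -/
def reachN (δ : Q → A → B → D) (dist : D → FDist Q) (T : Q) (n : ℕ)
    (sA : Strat Q A) (sB : Strat Q B) (q : Q) : ℝ :=
  reachSetN δ dist {T} n sA sB q

/-- Probability of eventually reaching the target `T` from state `q`. -/
def reach (δ : Q → A → B → D) (dist : D → FDist Q) (T : Q)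
    (sA : Strat Q A) (sB : Strat Q B) (q : Q) : ℝ :=
  ⨆ n : ℕ, reachN δ dist T n sA sB q

/-- The value of a Player A strategy from state `q`. -/
def valA (δ : Q → A → B → D) (dist : D → FDist Q) (T : Q) (sA : Strat Q A) (q : Q) : ℝ :=
  ⨅ sB : Strat Q B, reach δ dist T sA sB q

/-- The value of the game from state `q`. -/
def value (δ : Q → A → B → D) (dist : D → FDist Q) (T : Q) (q : Q) : ℝ :=
  ⨆ sA : Strat Q A, valA δ dist T sA q

/-- A state is maximizable when Player A has an optimal strategy from it. -/
def Maximizable (δ : Q → A → B → D) (dist : D → FDist Q) (T q : Q) : Prop :=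
  ∃ sA : Strat Q A, valA δ dist T sA q = value δ dist T q

/-- A positional Player A strategy locally dominates the valuation `v`. -/
def LocallyDominates (δ : Q → A → B → D) (dist : D → FDist Q)
    (sA : Q → FDist A) (v : Q → ℝ) : Prop :=
  ∀ q, v q ≤ valStratGF (fun a b => lift dist v (δ q a b)) (sA q)

/-- Transition function ι of the MDP induced by a positional Player A strategy. -/
def stepB [DecidableEq B] (δ : Q → A → B → D) (dist : D → FDist Q)
    (sA : Q → FDist A) (q : Q) (b : B) (q' : Q) : ℝ :=
  step δ dist (sA q) (dirac b) q q'

/-- An end component of the MDP induced by the positional Player A strategy `sA`. -/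
structure EndComp [DecidableEq B] (δ : Q → A → B → D) (dist : D → FDist Q)
    (sA : Q → FDist A) where
  states : Set Q
  acts : Q → Set B
  acts_nonempty : ∀ q ∈ states, (acts q).Nonempty
  closed : ∀ q ∈ states, ∀ b ∈ acts q, ∀ q', stepB δ dist sA q b q' ≠ 0 → q' ∈ states
  connected : ∀ q ∈ states, ∀ q' ∈ states,
    Relation.ReflTransGen
      (fun x y => x ∈ states ∧ ∃ b ∈ acts x, stepB δ dist sA x b y ≠ 0) q q'

/-- `S_D` : the Nature states having a non-zero probability to reach `S`. -/
def natS (dist : D → FDist Q) (S : Set Q) : Set D :=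
  { d | ∃ q ∈ S, (dist d).1 q ≠ 0 }

/-- Progressive optimal local strategies at `q` w.r.t. the set `Gd`. -/
def Prog (δ : Q → A → B → D) (dist : D → FDist Q) (m : Q → ℝ) (q : Q)
    (Gd : Set Q) : Set (FDist A) :=
  { σA | σA ∈ OptA (locPay δ dist m q) ∧
      ∀ b ∈ optActs (locPay δ dist m q) σA, ∃ a ∈ supp σA, δ q a b ∈ natS dist Gd }

/-- Risky optimal local strategies at `q` w.r.t. the set `Bd`. -/
def Risk (δ : Q → A → B → D) (dist : D → FDist Q) (m : Q → ℝ) (q : Q)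
    (Bd : Set Q) : Set (FDist A) :=
  { σA | σA ∈ OptA (locPay δ dist m q) ∧
      ∃ b ∈ optActs (locPay δ dist m q) σA, ∃ a ∈ supp σA, δ q a b ∈ natS dist Bd }

/-- Efficient local strategies: progressive and not risky. -/
def Eff (δ : Q → A → B → D) (dist : D → FDist Q) (m : Q → ℝ) (q : Q)
    (Gd Bd : Set Q) : Set (FDist A) :=
  Prog δ dist m q Gd \ Risk δ dist m q Bd

/-- The increasing sequence of sets of secure states w.r.t. `Bd`. -/
def SecN (δ : Q → A → B → D) (dist : D → FDist Q) (m : Q → ℝ) (T : Q) (Bd : Set Q) :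
    ℕ → Set Q
  | 0 => {T}
  | n + 1 => SecN δ dist m T Bd n ∪
      { q | q ∉ Bd ∧ (Eff δ dist m q (SecN δ dist m T Bd n) Bd).Nonempty }

/-- The set of secure states w.r.t. `Bd`. -/
def Sec (δ : Q → A → B → D) (dist : D → FDist Q) (m : Q → ℝ) (T : Q) (Bd : Set Q) :
    Set Q :=
  (⋃ n : ℕ, SecN δ dist m T Bd n) ∪ { q | m q = 0 }

/-- The sequence of sets of bad states. -/
def BadN (δ : Q → A → B → D) (dist : D → FDist Q) (m : Q → ℝ) (T : Q) : ℕ → Set Q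
  | 0 => ∅
  | n + 1 => (Sec δ dist m T (BadN δ dist m T n))ᶜ

/-- The set of bad states. -/
def Bad (δ : Q → A → B → D) (dist : D → FDist Q) (m : Q → ℝ) (T : Q) : Set Q :=
  BadN δ dist m T (Fintype.card Q)

/-- `α[y]` : the total valuation extending the partial valuation `α : O∖E → [0,1]`
with the value `y` on `E`. -/
def extendVal {O : Type} (E : Set O) (α : O → ℝ) (y : ℝ) : O → ℝ :=
  fun o => if o ∈ E then y else α o

/-- The map `f_α : y ↦ val_{⟨F, α[y]⟩}`. -/
def fval {O : Type} (ρ : A → B → O) (E : Set O) (α : O → ℝ) (y : ℝ) : ℝ :=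
  valGF (fun a b => extendVal E α y (ρ a b))

/-- `v` is the least fixed point of `f_α` on `[0,1]`. -/
def IsLfpVal {O : Type} (ρ : A → B → O) (E : Set O) (α : O → ℝ) (v : ℝ) : Prop :=
  v ∈ Set.Icc (0:ℝ) 1 ∧ fval ρ E α v = v ∧
    ∀ y ∈ Set.Icc (0:ℝ) 1, fval ρ E α y = y → v ≤ y

/-- The game form `ρ` is reach-maximizable w.r.t. the partial valuation `α : O∖E → [0,1]`. -/
def RMwrt {O : Type} (ρ : A → B → O) (E : Set O) (α : O → ℝ) : Prop :=
  ∀ v : ℝ, IsLfpVal ρ E α v →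
    v = 0 ∨
      ∃ σA ∈ OptA (fun a b => extendVal E α v (ρ a b)),
        ∀ b ∈ optActs (fun a b => extendVal E α v (ρ a b)) σA,
          ∃ a ∈ supp σA, ρ a b ∉ E

/-- A reach-maximizable game form: RM w.r.t. every partial valuation of its outcomes. -/
def RMform {O : Type} (ρ : A → B → O) : Prop :=
  ∀ (E : Set O) (α : O → ℝ), (∀ o ∉ E, α o ∈ Set.Icc (0:ℝ) 1) → RMwrt ρ E α

/-- A determined game form. -/
def Determined {O : Type} (ρ : A → B → O) : Prop :=
  ∀ E : Set O, (∃ a, ∀ b, ρ a b ∈ E) ∨ (∃ b, ∀ a, ρ a b ∉ E)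

/-- Transition function of the three-state reachability game `C_{(F,α)}`:
state `0` is `q₀`, state `1` is the target `⊤`, state `2` is the bin `⊥`. -/
def triδ {O : Type} (ρ : A → B → O) (E : Set O) :
    Fin 3 → A → B → (Fin 3 ⊕ {o : O // o ∉ E}) :=
  fun s a b =>
    if s = 0 then
      if h : ρ a b ∈ E then Sum.inl 0 else Sum.inr ⟨ρ a b, h⟩
    else Sum.inl s

/-- Nature distributions of the three-state reachability game `C_{(F,α)}`. -/
def triDist {O : Type} (E : Set O) (α : O → ℝ)
    (hα : ∀ o ∉ E, α o ∈ Set.Icc (0:ℝ) 1) :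
    (Fin 3 ⊕ {o : O // o ∉ E}) → FDist (Fin 3) := fun d =>
  match d with
  | Sum.inl t => dirac t
  | Sum.inr x =>
      ⟨![0, α x.1, 1 - α x.1], by
        obtain ⟨h0, h1⟩ := hα x.1 x.2
        constructor
        · intro s
          fin_cases s <;> simp <;> linarith
        · simp [Fin.sum_univ_three]⟩

/-- An abstract (finite) game form with actions `A` and `B`. -/
structure GameForm (A B : Type) where
  O : Type
  fin : Fintype O
  ρ : A → B → O

/-- All local interactions of the arena `δ` belong to the set `𝒢` of game forms
(up to a renaming of the outcomes into Nature states). -/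
def UsesForms {Q D : Type} (𝒢 : Set (GameForm A B)) (δ : Q → A → B → D) : Prop :=
  ∀ q, ∃ F ∈ 𝒢, ∃ g : F.O → D, δ q = fun a b => g (F.ρ a b)

/-- The sequence of iterates of Δ starting from the valuation `1_{⊤}`. -/
def vseq (δ : Q → A → B → D) (dist : D → FDist Q) (T : Q) : ℕ → Q → ℝ
  | 0 => fun q => if q = T then 1 else 0
  | n + 1 => Δop δ dist T (vseq δ dist T n)

/-- Relevant paths w.r.t. the strategy `sA` from the state `q₀`: the pair `(h, q)`
encodes the path `h · q` (history `h`, current state `q`). -/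
inductive Relevant [DecidableEq B] (δ : Q → A → B → D) (dist : D → FDist Q)
    (m : Q → ℝ) (sA : Strat Q A) (q₀ : Q) : List Q → Q → Prop
  | base : Relevant δ dist m sA q₀ [] q₀
  | step {h : List Q} {q q' : Q} :
      Relevant δ dist m sA q₀ h q →
      (∃ b ∈ optActs (locPay δ dist m q) (sA h q),
        0 < CRG.step δ dist (sA h q) (dirac b) q q') →
      Relevant δ dist m sA q₀ (h ++ [q]) q'

end CRG

/-!
Player B: at every state `q` let B play an optimal strategy of the one-shot game `⟨F_q, μ_m⟩`
(von Neumann's minimax theorem, via a Hahn–Banach separation). Since `Δ(m) = m`, the valuation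
`m` does not increase in expectation along any step from a state other than `⊤`, so by induction
on `n` it bounds the probability of reaching `⊤` within `n` steps, whatever Player A does. Hence
`val ≤ m`, and this positional strategy is uniformly optimal.

Player A: the iterates `vₙ = Δⁿ(1_⊤)` are guaranteed `n`-step reachability probabilities: play at
step `k` an optimal strategy of the local game valued by `v_(n-1-k)`. The iterates increase, and as
`Δ` is monotone and nonexpansive for the sup norm and `Q` is finite, their limit is a fixed point
of `Δ`; it therefore dominates the least fixed point `m`, which gives `m ≤ val`.
-/

open Finset

theorem nonpos_of_forall_mul_lt {y c : ℝ} (h : ∀ t : ℝ, 0 ≤ t → t * y < c) : y ≤ 0 := by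
  by_contra! hy
  have := h (|c| / y) (by positivity)
  rw [div_mul_cancel₀ _ hy.ne'] at this
  linarith [le_abs_self c]

namespace CRG

section FDist

variable {X : Type} [Fintype X]

instance [Nonempty X] : Nonempty (FDist X) :=
  ⟨dirac (Classical.arbitrary X)⟩

theorem FDist.sum_mul_add_const (σ : FDist X) (f : X → ℝ) (c : ℝ) :
    ∑ x, σ.1 x * (f x + c) = ∑ x, σ.1 x * f x + c := by
  simp only [mul_add, sum_add_distrib, ← sum_mul, σ.2.2, one_mul]

theorem FDist.sum_mul_const (σ : FDist X) (c : ℝ) : ∑ x, σ.1 x * c = c := by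
  simpa using FDist.sum_mul_add_const σ 0 c

theorem FDist.sum_mul_le_sum_mul (σ : FDist X) {f g : X → ℝ} (h : ∀ x, f x ≤ g x) :
    ∑ x, σ.1 x * f x ≤ ∑ x, σ.1 x * g x :=
  sum_le_sum fun x _ => mul_le_mul_of_nonneg_left (h x) (σ.2.1 x)

def FDist.normalize (w : X → ℝ) (hw : ∀ x, 0 ≤ w x) (hpos : 0 < ∑ x, w x) : FDist X :=
  ⟨fun x => w x / ∑ y, w y, fun x => div_nonneg (hw x) hpos.le, by
    rw [← sum_div, div_self hpos.ne']⟩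

end FDist

section NormalForm

variable {A B : Type} [Fintype A] [Fintype B] (u : A → B → ℝ)

def outA (a : A) (σB : FDist B) : ℝ := ∑ b, σB.1 b * u a b

theorem out_eq_sum_outB (σA : FDist A) (σB : FDist B) :
    out u σA σB = ∑ b, σB.1 b * outB u σA b := by
  simp only [out, outB, mul_sum]
  rw [sum_comm]
  exact sum_congr rfl fun b _ => sum_congr rfl fun a _ => by ring

theorem out_eq_sum_outA (σA : FDist A) (σB : FDist B) :
    out u σA σB = ∑ a, σA.1 a * outA u a σB := by
  simp only [out, outA, mul_sum]
  exact sum_congr rfl fun a _ => sum_congr rfl fun b _ => by ring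

theorem out_dirac_right (σA : FDist A) (b : B) : out u σA (dirac b) = outB u σA b := by
  rw [out_eq_sum_outB]
  simp [dirac]

theorem out_le_out_add (u' : A → B → ℝ) {c : ℝ} (h : ∀ a b, u a b ≤ u' a b + c)
    (σA : FDist A) (σB : FDist B) : out u σA σB ≤ out u' σA σB + c := by
  simp only [out_eq_sum_outA, outA]
  refine (FDist.sum_mul_le_sum_mul σA fun a => ?_).trans_eq (FDist.sum_mul_add_const σA _ c)
  exact (FDist.sum_mul_le_sum_mul σB (h a)).trans_eq (FDist.sum_mul_add_const σB _ c)

theorem out_const (c : ℝ) (σA : FDist A) (σB : FDist B) :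
    out (fun _ _ => c) σA σB = c := by
  simp only [out_eq_sum_outA, outA, FDist.sum_mul_const]

variable [Nonempty B]

theorem inf'_outB_le_out (σA : FDist A) (σB : FDist B) :
    univ.inf' univ_nonempty (outB u σA) ≤ out u σA σB := by
  rw [out_eq_sum_outB, ← FDist.sum_mul_const σB (univ.inf' univ_nonempty (outB u σA))]
  exact FDist.sum_mul_le_sum_mul σB fun b => inf'_le _ (mem_univ b)

theorem bddBelow_out (σA : FDist A) : BddBelow (Set.range (out u σA)) :=
  ⟨_, Set.forall_mem_range.2 (inf'_outB_le_out u σA)⟩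

theorem valStratGF_le_out (σA : FDist A) (σB : FDist B) : valStratGF u σA ≤ out u σA σB :=
  ciInf_le (bddBelow_out u σA) σB

theorem valStratGF_eq_inf' (σA : FDist A) :
    valStratGF u σA = univ.inf' univ_nonempty (outB u σA) := by
  obtain ⟨b, -, hb⟩ := exists_mem_eq_inf' (univ_nonempty (α := B)) (outB u σA)
  refine le_antisymm ?_ (le_ciInf (inf'_outB_le_out u σA))
  rw [hb, ← out_dirac_right]
  exact valStratGF_le_out u σA _

variable [Nonempty A]

theorem exists_forall_valStratGF_le :
    ∃ σ₀ : FDist A, ∀ σA, valStratGF u σA ≤ valStratGF u σ₀ := by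
  have hcont : Continuous fun p : A → ℝ => univ.inf' univ_nonempty fun b => ∑ a, p a * u a b :=
    Continuous.finset_inf'_apply _ fun b _ =>
      continuous_finsetSum _ fun a _ => (continuous_apply a).mul continuous_const
  obtain ⟨p, hp, hmax⟩ := (isCompact_stdSimplex ℝ A).exists_isMaxOn
    ⟨_, (dirac (Classical.arbitrary A)).2⟩ hcont.continuousOn
  exact ⟨⟨p, hp⟩, fun σA => (valStratGF_eq_inf' u σA).trans_le
    ((hmax σA.2).trans_eq (valStratGF_eq_inf' u ⟨p, hp⟩).symm)⟩

theorem bddAbove_valStratGF : BddAbove (Set.range (valStratGF u)) :=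
  let ⟨_, h⟩ := exists_forall_valStratGF_le u
  ⟨_, Set.forall_mem_range.2 h⟩

theorem valStratGF_le_valGF (σA : FDist A) : valStratGF u σA ≤ valGF u :=
  le_ciSup (bddAbove_valStratGF u) σA

theorem OptA_nonempty : (OptA u).Nonempty :=
  let ⟨σ₀, h⟩ := exists_forall_valStratGF_le u
  ⟨σ₀, le_antisymm (valStratGF_le_valGF u σ₀) (ciSup_le h)⟩

theorem valGF_le_valGF_add (u' : A → B → ℝ) {c : ℝ} (h : ∀ a b, u a b ≤ u' a b + c) :
    valGF u ≤ valGF u' + c := by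
  refine ciSup_le fun σA => ?_
  have : valStratGF u σA - c ≤ valStratGF u' σA := le_ciInf fun σB => by
    linarith [valStratGF_le_out u σA σB, out_le_out_add u u' h σA σB]
  linarith [valStratGF_le_valGF u' σA]

theorem valGF_mono {u' : A → B → ℝ} (h : ∀ a b, u a b ≤ u' a b) : valGF u ≤ valGF u' := by
  simpa using valGF_le_valGF_add u u' (c := 0) (by simpa using h)

theorem valGF_const (c : ℝ) : valGF (fun (_ : A) (_ : B) => c) = c := by
  simp [valGF, valStratGF, out_const]

end NormalForm

section Minimax

variable {A B : Type} [Fintype A] [Fintype B] [Nonempty B] (u : A → B → ℝ)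

/-- Theorem of the alternative: separate the lower orthant below `lam` from the compact convex
set of payoff vectors of Player B's mixed strategies; the normal of the separating hyperplane,
normalized, is the required strategy of Player A. -/
theorem exists_forall_lt_outB {lam : ℝ} (h : ∀ σB : FDist B, ∃ a, lam < outA u a σB) :
    ∃ σA : FDist A, ∀ b, lam < outB u σA b := by
  let M := Matrix.mulVecLin (R := ℝ) u
  have hM : ∀ p a, M p a = ∑ b, p b * u a b := fun p a =>
    (sum_congr rfl fun b _ => mul_comm (u a b) (p b) : ∑ b, u a b * p b = _)
  have hdisj : Disjoint (Set.Iic fun _ : A => lam) (M '' stdSimplex ℝ B) := by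
    rw [Set.disjoint_left]
    rintro z hz ⟨p, hp, rfl⟩
    obtain ⟨a, ha⟩ := h ⟨p, hp⟩
    exact (hz a).not_gt (by rwa [hM])
  obtain ⟨f, c₁, c₂, hN, hc, hK⟩ := geometric_hahn_banach_closed_compact (convex_Iic _)
    isClosed_Iic ((convex_stdSimplex ℝ B).linear_image M)
    ((isCompact_stdSimplex ℝ B).image M.continuous_of_finiteDimensional) hdisj
  set e : A → A → ℝ := fun a j => if a = j then 1 else 0
  set w : A → ℝ := fun a => f (e a)
  have hf : ∀ z, f z = ∑ a, z a * w a := fun z => by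
    simpa using f.toLinearMap.pi_apply_eq_sum_univ z
  have hw : ∀ a, 0 ≤ w a := by
    intro a
    refine neg_nonpos.1 (nonpos_of_forall_mul_lt (c := c₁ - f fun _ => lam) fun t ht => ?_)
    have he : 0 ≤ e a := fun j => by simp only [e]; split_ifs <;> norm_num
    have := hN ((fun _ => lam) - t • e a) (sub_le_self _ (smul_nonneg ht he))
    rw [map_sub, map_smul, smul_eq_mul] at this
    linarith
  have hcol : ∀ b, lam * ∑ a, w a < ∑ a, u a b * w a := fun b => by
    have h₁ : lam * ∑ a, w a < c₁ := by
      simpa [hf, mul_sum] using hN (fun _ => lam) (Set.mem_Iic.2 le_rfl)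
    have h₂ : c₂ < ∑ a, u a b * w a := by
      simpa [hf, hM, dirac] using hK _ ⟨(dirac b).1, (dirac b).2, rfl⟩
    linarith
  have hpos : 0 < ∑ a, w a := by
    by_contra! hle
    have hw0 : ∀ a, w a = 0 := fun a =>
      (sum_eq_zero_iff_of_nonneg fun a _ => hw a).1
        (le_antisymm hle (sum_nonneg fun a _ => hw a)) a (mem_univ a)
    simpa [hw0] using hcol (Classical.arbitrary B)
  refine ⟨FDist.normalize w hw hpos, fun b => ?_⟩
  have hout : outB u (FDist.normalize w hw hpos) b = (∑ a, u a b * w a) / ∑ a, w a := by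
    simp only [outB, FDist.normalize, sum_div, mul_comm, mul_div_assoc]
  rw [hout, lt_div_iff₀ hpos]
  linarith [hcol b]

theorem exists_forall_out_le [Nonempty A] : ∃ σB : FDist B, ∀ σA, out u σA σB ≤ valGF u := by
  obtain ⟨σB, hσB⟩ : ∃ σB : FDist B, ∀ a, outA u a σB ≤ valGF u := by
    by_contra! h
    obtain ⟨σA, hσA⟩ := exists_forall_lt_outB u h
    have : valGF u < valStratGF u σA := by
      rw [valStratGF_eq_inf']
      exact (lt_inf'_iff _).2 fun b _ => hσA b
    exact this.not_ge (valStratGF_le_valGF u σA)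
  refine ⟨σB, fun σA => ?_⟩
  rw [out_eq_sum_outA, ← FDist.sum_mul_const σA (valGF u)]
  exact FDist.sum_mul_le_sum_mul σA hσB

end Minimax

section Lift

variable {A B Q D : Type} [Fintype Q] (δ : Q → A → B → D) (dist : D → FDist Q)

theorem lift_mem_Icc {v : Q → ℝ} (hv : ∀ q, v q ∈ Set.Icc (0 : ℝ) 1) (d : D) :
    lift dist v d ∈ Set.Icc (0 : ℝ) 1 := by
  refine ⟨?_, (FDist.sum_mul_le_sum_mul (dist d) fun q => (hv q).2).trans_eq
    (FDist.sum_mul_const (dist d) 1)⟩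
  exact (FDist.sum_mul_const (dist d) 0).symm.trans_le
    (FDist.sum_mul_le_sum_mul (dist d) fun q => (hv q).1)

theorem locPay_const (c : ℝ) (q : Q) : locPay δ dist (fun _ => c) q = fun _ _ => c :=
  funext₂ fun a b => FDist.sum_mul_const (dist (δ q a b)) c

end Lift

section Game

variable {A B Q D : Type} [Fintype A] [Fintype B] [Fintype Q]
  (δ : Q → A → B → D) (dist : D → FDist Q) (T : Q)

instance {X : Type} [Fintype X] [Nonempty X] : Nonempty (Strat Q X) :=
  ⟨fun _ _ => Classical.arbitrary _⟩

theorem step_nonneg (σA : FDist A) (σB : FDist B) (q q' : Q) :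
    0 ≤ step δ dist σA σB q q' :=
  sum_nonneg fun a _ => sum_nonneg fun b _ =>
    mul_nonneg (mul_nonneg (σA.2.1 a) (σB.2.1 b)) ((dist (δ q a b)).2.1 q')

theorem sum_step_mul (σA : FDist A) (σB : FDist B) (q : Q) (v : Q → ℝ) :
    ∑ q', step δ dist σA σB q q' * v q' = out (locPay δ dist v q) σA σB := by
  simp only [step, out, locPay, lift, sum_mul, mul_sum]
  rw [sum_comm]
  refine sum_congr rfl fun a _ => ?_
  rw [sum_comm]
  exact sum_congr rfl fun b _ => sum_congr rfl fun q' _ => by ring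

theorem reachSetNAux_nonneg (S : Set Q) (n : ℕ) (sA : Strat Q A) (sB : Strat Q B) (h : List Q)
    (q : Q) : 0 ≤ reachSetNAux δ dist S n sA sB h q := by
  induction n generalizing h q with
  | zero =>
    simp only [reachSetNAux]
    split_ifs <;> norm_num
  | succ n ih =>
    simp only [reachSetNAux]
    split_ifs
    · exact zero_le_one
    · exact sum_nonneg fun q' _ => mul_nonneg (step_nonneg δ dist _ _ q q') (ih _ q')

theorem reachSetNAux_le {S : Set Q} {v : Q → ℝ} (hv₀ : ∀ q, 0 ≤ v q) (hvS : ∀ q ∈ S, 1 ≤ v q)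
    {sA : Strat Q A} {sB : Strat Q B}
    (hstep : ∀ h, ∀ q ∉ S, ∑ q', step δ dist (sA h q) (sB h q) q q' * v q' ≤ v q)
    (n : ℕ) (h : List Q) (q : Q) : reachSetNAux δ dist S n sA sB h q ≤ v q := by
  induction n generalizing h q with
  | zero =>
    simp only [reachSetNAux]
    split_ifs with hq
    exacts [hvS q hq, hv₀ q]
  | succ n ih =>
    simp only [reachSetNAux]
    split_ifs with hq
    · exact hvS q hq
    · exact (sum_le_sum fun q' _ =>
        mul_le_mul_of_nonneg_left (ih _ q') (step_nonneg δ dist _ _ q q')).trans (hstep h q hq)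

theorem reachN_le_one (n : ℕ) (sA : Strat Q A) (sB : Strat Q B) (q : Q) :
    reachN δ dist T n sA sB q ≤ 1 :=
  reachSetNAux_le δ dist (v := fun _ => 1) (sA := sA) (sB := sB) (fun _ => zero_le_one)
    (fun _ _ => le_rfl) (fun h q _ => (sum_step_mul δ dist (sA h q) (sB h q) q _).trans_le
      (by rw [locPay_const]; exact (out_const 1 _ _).le)) n [] q

theorem bddAbove_reachN (sA : Strat Q A) (sB : Strat Q B) (q : Q) :
    BddAbove (Set.range fun n => reachN δ dist T n sA sB q) :=
  ⟨1, Set.forall_mem_range.2 fun n => reachN_le_one δ dist T n sA sB q⟩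

theorem bddBelow_reach (sA : Strat Q A) (q : Q) :
    BddBelow (Set.range fun sB : Strat Q B => reach δ dist T sA sB q) :=
  ⟨0, Set.forall_mem_range.2 fun sB => le_ciSup_of_le (bddAbove_reachN δ dist T sA sB q) 0
    (reachSetNAux_nonneg δ dist _ 0 sA sB [] q)⟩

theorem bddAbove_valA [Nonempty B] (q : Q) :
    BddAbove (Set.range fun sA : Strat Q A => valA δ dist T sA q) :=
  ⟨1, Set.forall_mem_range.2 fun sA => ciInf_le_of_le (bddBelow_reach δ dist T sA q)
    (fun _ _ => Classical.arbitrary _) (ciSup_le fun n => reachN_le_one δ dist T n sA _ q)⟩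

theorem value_le_of_forall_reach_le [Nonempty A] {sB : Strat Q B} {q : Q} {c : ℝ}
    (h : ∀ sA, reach δ dist T sA sB q ≤ c) : value δ dist T q ≤ c :=
  ciSup_le fun sA => (ciInf_le (bddBelow_reach δ dist T sA q) sB).trans (h sA)

theorem Δop_self (v : Q → ℝ) : Δop δ dist T v T = 1 := if_pos rfl

theorem Δop_of_ne (v : Q → ℝ) {q : Q} (hq : q ≠ T) :
    Δop δ dist T v q = valGF (locPay δ dist v q) := if_neg hq

theorem reach_ofPos_le {v : Q → ℝ} (hv₀ : ∀ q, 0 ≤ v q) (hv : ∀ q, Δop δ dist T v q ≤ v q)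
    {sB : Q → FDist B}
    (hsB : ∀ q σA, out (locPay δ dist v q) σA (sB q) ≤ valGF (locPay δ dist v q))
    (sA : Strat Q A) (q : Q) : reach δ dist T sA (ofPos sB) q ≤ v q := by
  refine ciSup_le fun n => reachSetNAux_le δ dist hv₀ ?_ ?_ n [] q
  · intro q hq
    rw [Set.mem_singleton_iff.1 hq]
    exact (Δop_self δ dist T v).symm.trans_le (hv T)
  · intro h q hq
    rw [sum_step_mul]
    exact (hsB q _).trans ((Δop_of_ne δ dist T v hq).symm.trans_le (hv q))

section Iterates

variable [Nonempty A] [Nonempty B]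

theorem Δop_le_add {v w : Q → ℝ} {c : ℝ} (hc : 0 ≤ c) (h : ∀ q, v q ≤ w q + c) (q : Q) :
    Δop δ dist T v q ≤ Δop δ dist T w q + c := by
  by_cases hq : q = T
  · simp only [hq, Δop_self, le_add_iff_nonneg_right, hc]
  rw [Δop_of_ne δ dist T v hq, Δop_of_ne δ dist T w hq]
  exact valGF_le_valGF_add _ _ fun a b =>
    (FDist.sum_mul_le_sum_mul _ h).trans_eq (FDist.sum_mul_add_const _ _ c)

theorem Δop_mono : Monotone (Δop δ dist T) := fun v w h q => by
  simpa using Δop_le_add δ dist T le_rfl (fun q => by simpa using h q) q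

theorem Δop_mem_Icc {v : Q → ℝ} (hv : ∀ q, v q ∈ Set.Icc (0 : ℝ) 1) (q : Q) :
    Δop δ dist T v q ∈ Set.Icc (0 : ℝ) 1 := by
  by_cases hq : q = T
  · simp [hq, Δop_self]
  rw [Δop_of_ne δ dist T v hq]
  exact ⟨(valGF_const 0).symm.trans_le (valGF_mono _ fun a b => (lift_mem_Icc dist hv _).1),
    (valGF_mono _ fun a b => (lift_mem_Icc dist hv _).2).trans_eq (valGF_const 1)⟩

theorem vseq_mem_Icc (n : ℕ) (q : Q) : vseq δ dist T n q ∈ Set.Icc (0 : ℝ) 1 := by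
  induction n generalizing q with
  | zero =>
    simp only [vseq]
    split_ifs <;> norm_num
  | succ n ih => exact Δop_mem_Icc δ dist T ih q

theorem vseq_mono : Monotone (vseq δ dist T) := by
  refine monotone_nat_of_le_succ fun n => ?_
  induction n with
  | zero =>
    intro q
    by_cases hq : q = T
    · simp [vseq, hq, Δop_self]
    · simpa [vseq, hq] using (vseq_mem_Icc δ dist T 1 q).1
  | succ n ih => exact Δop_mono δ dist T ih

def vseqSup (q : Q) : ℝ := ⨆ n, vseq δ dist T n q

theorem bddAbove_vseq (q : Q) : BddAbove (Set.range fun n => vseq δ dist T n q) :=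
  ⟨1, Set.forall_mem_range.2 fun n => (vseq_mem_Icc δ dist T n q).2⟩

theorem vseq_le_vseqSup (n : ℕ) (q : Q) : vseq δ dist T n q ≤ vseqSup δ dist T q :=
  le_ciSup (bddAbove_vseq δ dist T q) n

theorem vseqSup_mem_Icc (q : Q) : vseqSup δ dist T q ∈ Set.Icc (0 : ℝ) 1 :=
  ⟨(vseq_mem_Icc δ dist T 0 q).1.trans (vseq_le_vseqSup δ dist T 0 q),
    ciSup_le fun n => (vseq_mem_Icc δ dist T n q).2⟩

theorem exists_vseqSup_le_vseq_add {ε : ℝ} (hε : 0 < ε) :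
    ∃ N, ∀ q, vseqSup δ dist T q ≤ vseq δ dist T N q + ε := by
  have : ∀ᶠ n in Filter.atTop, ∀ q, vseqSup δ dist T q - ε < vseq δ dist T n q :=
    Filter.eventually_all.2 fun q =>
      (tendsto_atTop_ciSup (fun _ _ h => vseq_mono δ dist T h q) (bddAbove_vseq δ dist T q)
        ).eventually_const_lt (sub_lt_self _ hε)
  obtain ⟨N, hN⟩ := this.exists
  exact ⟨N, fun q => by linarith [hN q]⟩

theorem Δop_vseqSup : Δop δ dist T (vseqSup δ dist T) = vseqSup δ dist T := by
  funext q
  refine le_antisymm (le_of_forall_pos_le_add fun ε hε => ?_) (ciSup_le fun n => ?_)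
  · obtain ⟨N, hN⟩ := exists_vseqSup_le_vseq_add δ dist T hε
    exact (Δop_le_add δ dist T hε.le hN q).trans
      (add_le_add_left (vseq_le_vseqSup δ dist T (N + 1) q) ε)
  · exact (vseq_mono δ dist T n.le_succ q).trans
      (Δop_mono δ dist T (vseq_le_vseqSup δ dist T n) q)

def iterStrat (n : ℕ) : Strat Q A := fun h q =>
  (OptA_nonempty (locPay δ dist (vseq δ dist T (n - 1 - h.length)) q)).some

theorem vseq_le_reachSetNAux {n j : ℕ} {h : List Q} (hlen : h.length + j = n)
    (sB : Strat Q B) (q : Q) :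
    vseq δ dist T j q ≤ reachSetNAux δ dist {T} j (iterStrat δ dist T n) sB h q := by
  induction j generalizing h q with
  | zero =>
    simp only [vseq, reachSetNAux, Set.mem_singleton_iff]
    split_ifs <;> norm_num
  | succ j ih =>
    simp only [reachSetNAux]
    split_ifs with hq
    · exact (vseq_mem_Icc δ dist T _ q).2
    set σA := iterStrat δ dist T n h q
    have hσA : σA ∈ OptA (locPay δ dist (vseq δ dist T j) q) := by
      simp only [σA, iterStrat, show n - 1 - h.length = j by omega]
      exact Set.Nonempty.some_mem _
    calc vseq δ dist T (j + 1) q = valStratGF (locPay δ dist (vseq δ dist T j) q) σA :=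
          (Δop_of_ne δ dist T _ hq).trans hσA.symm
      _ ≤ out (locPay δ dist (vseq δ dist T j) q) σA (sB h q) := valStratGF_le_out _ _ _
      _ = ∑ q', step δ dist σA (sB h q) q q' * vseq δ dist T j q' := (sum_step_mul ..).symm
      _ ≤ _ := sum_le_sum fun q' _ => mul_le_mul_of_nonneg_left
          (ih (by simp only [List.length_append, List.length_singleton]; omega) q')
          (step_nonneg δ dist _ _ q q')

theorem vseq_le_value (n : ℕ) (q : Q) : vseq δ dist T n q ≤ value δ dist T q :=
  (le_ciInf fun sB => (vseq_le_reachSetNAux δ dist T (h := []) (by simp) sB q).trans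
    (le_ciSup (bddAbove_reachN δ dist T _ sB q) n)).trans
    (le_ciSup (bddAbove_valA δ dist T q) (iterStrat δ dist T n))

end Iterates
end Game
end CRG

theorem stmt0_general
    {A B Q D : Type} [Fintype A] [Fintype B] [Fintype Q]
    [Nonempty A] [Nonempty B]
    (δ : Q → A → B → D) (dist : D → FDist Q) (T : Q)
    (m : Q → ℝ) (hm : CRG.IsLfpDelta δ dist T m) :
    (∀ q : Q, CRG.value δ dist T q = m q) ∧
      ∃ sB : Q → FDist B, ∀ (q : Q) (sA : CRG.Strat Q A),
        CRG.reach δ dist T sA (CRG.ofPos sB) q ≤ m q := by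
  obtain ⟨hm01, hfix, hleast⟩ := hm
  choose sB hsB using fun q => CRG.exists_forall_out_le (CRG.locPay δ dist m q)
  have hB : ∀ q sA, CRG.reach δ dist T sA (CRG.ofPos sB) q ≤ m q :=
    fun q sA => CRG.reach_ofPos_le δ dist T (fun q => (hm01 q).1)
      (fun q => (congrFun hfix q).le) hsB sA q
  refine ⟨fun q => le_antisymm (CRG.value_le_of_forall_reach_le δ dist T (hB q)) ?_, sB, hB⟩
  calc m q ≤ CRG.vseqSup δ dist T q :=
        hleast _ (CRG.vseqSup_mem_Icc δ dist T) (CRG.Δop_vseqSup δ dist T) q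
    _ ≤ CRG.value δ dist T q := ciSup_le fun n => CRG.vseq_le_value δ dist T n q

/-- the value of a finite concurrent reachability game equals the least
fixed point `m` of the operator `Δ`, and Player B has a uniformly optimal positional
strategy. -/
theorem stmt0
    {A B Q D : Type} [Fintype A] [Fintype B] [Fintype Q] [Fintype D]
    [Nonempty A] [Nonempty B] [Nonempty Q] [Nonempty D] [DecidableEq Q]
    (δ : Q → A → B → D) (dist : D → FDist Q) (T : Q)
    (habs : CRG.Absorbing δ dist T)
    (m : Q → ℝ) (hm : CRG.IsLfpDelta δ dist T m) :
    (∀ q : Q, CRG.value δ dist T q = m q) ∧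
      ∃ sB : Q → FDist B, ∀ (q : Q) (sA : CRG.Strat Q A),
        CRG.reach δ dist T sA (CRG.ofPos sB) q ≤ m q :=
  stmt0_general δ dist T m hm
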